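/- arXiv:2010.09014 — 7 statements merged into one kernel-verified Lean document; each statement's English description precedes it below -/
import Mathlib

section
/- Let f be a natural number and p ≤ 63. Suppose g = f AND (2^p - 1) is nonzero, and let m be the position of the highest set bit of g, so that h = 2^(m+1) is the smallest power of 2 exceeding g. Then bit i is set in (NOT f) AND (f - h) if and only if m < i, bit i of f is 0, and all bits j with m < j < i have bit j of f equal to 0; in other words, (NOT f) AND (f - 2^(m+1)) marks exactly the maximal run of zero bits of f starting at position m+1. -/
lemma testBit_log2' (N : ℕ) (h : N ≠ 0) : N.testBit N.log2 = true := by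
  have h1 : 2 ^ N.log2 ≤ N := Nat.log2_self_le h
  have h2 : N < 2 ^ (N.log2 + 1) := Nat.lt_log2_self
  rw [Nat.testBit_eq_decide_div_mod_eq]
  have hdiv : N / 2 ^ N.log2 = 1 := by
    rw [pow_succ] at h2
    refine Nat.div_eq_of_lt_le (by omega) (by omega)
  simp [hdiv]

lemma key_run (N m : ℕ) (hm : N.testBit m = true) (hN : 2 ^ (m + 1) ≤ N) (i : ℕ) :
    ((N - 2 ^ (m + 1)).testBit i = true ∧ N.testBit i = false) ↔
      (m < i ∧ N.testBit i = false ∧ ∀ j, m < j → j < i → N.testBit j = false) := by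
  have hpm : 0 < 2 ^ (m + 1) := by positivity
  have hN0 : N ≠ 0 := by omega
  have hex : ∃ j, m < j ∧ N.testBit j = true := by
    refine ⟨N.log2, ?_, testBit_log2' N hN0⟩
    have := (Nat.le_log2 hN0).mpr hN
    omega
  classical
  obtain ⟨k, hk1, hk2, hk3⟩ : ∃ k, m < k ∧ N.testBit k = true ∧
      ∀ j, m < j → j < k → N.testBit j = false := by
    refine ⟨Nat.find hex, (Nat.find_spec hex).1, (Nat.find_spec hex).2, ?_⟩
    intro j hj1 hj2
    have := Nat.find_min hex hj2
    simpa [hj1] using this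
  have hpk : 0 < 2 ^ k := by positivity
  have hHodd : N / 2 ^ k % 2 = 1 := by
    have h := hk2
    rw [Nat.testBit_eq_decide_div_mod_eq] at h
    exact of_decide_eq_true h
  have hrbits : ∀ j, j < k → (N % 2 ^ k).testBit j = N.testBit j := by
    intro j hj
    rw [Nat.testBit_mod_two_pow]
    simp [hj]
  obtain ⟨H, r, hNrH, hrk, hHodd, hrbits⟩ :
      ∃ H r, N = 2 ^ k * H + r ∧ r < 2 ^ k ∧ H % 2 = 1 ∧
        ∀ j, j < k → r.testBit j = N.testBit j :=
    ⟨N / 2 ^ k, N % 2 ^ k, (Nat.div_add_mod N (2 ^ k)).symm,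
      Nat.mod_lt _ hpk, hHodd, hrbits⟩
  -- r < 2^(m+1)
  have hrm : r < 2 ^ (m + 1) := by
    by_contra hcon
    push_neg at hcon
    have hr0 : r ≠ 0 := by omega
    have hlog : m + 1 ≤ r.log2 := (Nat.le_log2 hr0).mpr hcon
    have hlogr : 2 ^ r.log2 ≤ r := Nat.log2_self_le hr0
    have hlogk : r.log2 < k := by
      by_contra hc
      push_neg at hc
      have : 2 ^ k ≤ 2 ^ r.log2 := Nat.pow_le_pow_right (by norm_num) hc
      omega
    have hbit : r.testBit r.log2 = true := testBit_log2' r hr0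
    rw [hrbits r.log2 hlogk, hk3 r.log2 (by omega) hlogk] at hbit
    exact Bool.false_ne_true hbit
  obtain ⟨H', rfl⟩ : ∃ H', H = H' + 1 := ⟨H - 1, by omega⟩
  have hH'even : H' % 2 = 0 := by omega
  have hmk : m + 1 ≤ k := hk1
  have hpmpk : 2 ^ (m + 1) ≤ 2 ^ k := Nat.pow_le_pow_right (by norm_num) hmk
  obtain ⟨C, hCdef⟩ : ∃ C, C = 2 ^ k - 2 ^ (m + 1) + r := ⟨_, rfl⟩
  have hCk : C < 2 ^ k := by omega
  have hsub : N - 2 ^ (m + 1) = 2 ^ k * H' + C := by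
    have h1 : 2 ^ k * (H' + 1) = 2 ^ k * H' + 2 ^ k := by ring
    omega
  have hpow : 2 ^ k = 2 ^ (m + 1) * 2 ^ (k - (m + 1)) := by
    rw [← pow_add]; congr 1; omega
  obtain ⟨t, ht⟩ : ∃ t, 2 ^ (k - (m + 1)) = t + 1 := by
    have h0 : 0 < 2 ^ (k - (m + 1)) := by positivity
    exact ⟨2 ^ (k - (m + 1)) - 1, by omega⟩
  have hCdecomp : C = 2 ^ (m + 1) * t + r := by
    rw [hpow, ht] at hCdef
    have h1 : 2 ^ (m + 1) * (t + 1) = 2 ^ (m + 1) * t + 2 ^ (m + 1) := by ring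
    omega
  have htbits : ∀ s, t.testBit s = decide (s < k - (m + 1)) := by
    intro s
    have htt : t = 2 ^ (k - (m + 1)) - 1 := by omega
    rw [htt, Nat.testBit_two_pow_sub_one]
  have htestE : ∀ j, (N - 2 ^ (m + 1)).testBit j =
      if j < k then C.testBit j else H'.testBit (j - k) :=
    fun j => by rw [hsub]; exact Nat.testBit_two_pow_mul_add H' hCk j
  have htestN : ∀ j, N.testBit j =
      if j < k then r.testBit j else (H' + 1).testBit (j - k) :=
    fun j => by rw [hNrH]; exact Nat.testBit_two_pow_mul_add (H' + 1) hrk j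
  have htestC : ∀ j, C.testBit j =
      if j < m + 1 then r.testBit j else decide (j - (m + 1) < k - (m + 1)) :=
    fun j => by
      rw [hCdecomp, Nat.testBit_two_pow_mul_add t hrm j, htbits]
  have hHbit0 : H'.testBit 0 = false := by simp [Nat.testBit_zero, hH'even]
  have hHbits : ∀ s, 1 ≤ s → H'.testBit s = (H' + 1).testBit s := by
    intro s hs
    obtain ⟨s', rfl⟩ : ∃ s', s = s' + 1 := ⟨s - 1, by omega⟩
    rw [Nat.testBit_add_one, Nat.testBit_add_one]
    congr 1
    omega
  rcases lt_trichotomy i k with hik | rfl | hik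
  · rcases Nat.lt_or_ge m i with him | him
    · -- m < i < k : the run
      have hNi : N.testBit i = false := hk3 i him hik
      have hEi : (N - 2 ^ (m + 1)).testBit i = true := by
        rw [htestE i, if_pos hik, htestC i, if_neg (by omega)]
        simp only [decide_eq_true_eq]
        omega
      exact ⟨fun _ => ⟨him, hNi, fun j hj1 hj2 => hk3 j hj1 (by omega)⟩,
        fun _ => ⟨hEi, hNi⟩⟩
    · -- i ≤ m
      have hEi : (N - 2 ^ (m + 1)).testBit i = N.testBit i := by
        rw [htestE i, if_pos hik, htestC i, if_pos (by omega), htestN i, if_pos hik,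
          hrbits i (by omega)]
      constructor
      · rintro ⟨h1, h2⟩; rw [hEi, h2] at h1; exact absurd h1 Bool.false_ne_true
      · rintro ⟨h1, -⟩; omega
  · -- i = k
    have hEi : (N - 2 ^ (m + 1)).testBit i = false := by
      rw [htestE i, if_neg (by omega)]
      simpa using hHbit0
    constructor
    · rintro ⟨h1, -⟩; rw [hEi] at h1; exact absurd h1 Bool.false_ne_true
    · rintro ⟨-, h2, -⟩; rw [hk2] at h2; exact absurd h2.symm Bool.false_ne_true
  · -- i > k
    have hEi : (N - 2 ^ (m + 1)).testBit i = N.testBit i := by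
      rw [htestE i, if_neg (by omega), htestN i, if_neg (by omega)]
      exact hHbits (i - k) (by omega)
    constructor
    · rintro ⟨h1, h2⟩; rw [hEi, h2] at h1; exact absurd h1 Bool.false_ne_true
    · rintro ⟨-, -, h3⟩
      have hh := h3 k hk1 hik
      rw [hk2] at hh; simp at hh

/-- If `g = f &&& (2^p - 1)` is nonzero with `p ≤ 63`, and `m` is the position of
the highest set bit of `g`, then `~~~f &&& (f - 2^(m+1))` (in 64-bit arithmetic)
marks exactly the maximal run of zero bits of `f` starting at position `m + 1`. -/
theorem fillrange_nonzero_case (f : BitVec 64) (p : ℕ) (hp : p ≤ 63)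
    (g : BitVec 64) (hg : g = f &&& BitVec.ofNat 64 (2 ^ p - 1)) (hg0 : g ≠ 0)
    (m : ℕ) (hm : m = Nat.log2 g.toNat) :
    ∀ i, i < 64 →
      ((~~~f &&& (f - BitVec.ofNat 64 (2 ^ (m + 1)))).getLsbD i = true ↔
        (m < i ∧ f.getLsbD i = false ∧ ∀ j, m < j → j < i → f.getLsbD j = false)) := by
  intro i hi
  have hgt : g.toNat = f.toNat &&& (2 ^ p - 1) := by
    rw [hg, BitVec.toNat_and, BitVec.toNat_ofNat, Nat.mod_eq_of_lt]
    have h1 : (2:ℕ) ^ p ≤ 2 ^ 63 := Nat.pow_le_pow_right (by norm_num) hp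
    have h64 : (2:ℕ) ^ 63 < 2 ^ 64 := by norm_num
    omega
  have hg0' : g.toNat ≠ 0 := by
    intro h
    exact hg0 (by apply BitVec.eq_of_toNat_eq; simpa using h)
  have htm : g.toNat.testBit m = true := by rw [hm]; exact testBit_log2' _ hg0'
  rw [hgt, Nat.testBit_and, Bool.and_eq_true] at htm
  obtain ⟨hFm, hmaskm⟩ := htm
  rw [Nat.testBit_two_pow_sub_one] at hmaskm
  have hmp : m < p := of_decide_eq_true hmaskm
  have hm63 : m + 1 ≤ 63 := by omega
  have hF : f.toNat < 2 ^ 64 := f.isLt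
  have hNb : ∀ j, j < 64 → (f.toNat + 2 ^ 64).testBit j = f.toNat.testBit j := by
    intro j hj
    have hmod : (f.toNat + 2 ^ 64) % 2 ^ 64 = f.toNat := by omega
    conv_rhs => rw [← hmod]
    rw [Nat.testBit_mod_two_pow]
    simp [hj]
  have hNm : (f.toNat + 2 ^ 64).testBit m = true := by
    rw [hNb m (by omega)]; exact hFm
  have hpmle : (2:ℕ) ^ (m + 1) ≤ 2 ^ 63 := Nat.pow_le_pow_right (by norm_num) hm63
  have h6364 : (2:ℕ) ^ 63 < 2 ^ 64 := by norm_num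
  have hNle : 2 ^ (m + 1) ≤ f.toNat + 2 ^ 64 := by omega
  have hkey := key_run (f.toNat + 2 ^ 64) m hNm hNle i
  have hh : (BitVec.ofNat 64 (2 ^ (m + 1))).toNat = 2 ^ (m + 1) := by
    rw [BitVec.toNat_ofNat, Nat.mod_eq_of_lt]
    omega
  have hgl : ∀ (x : BitVec 64) (j : ℕ), x.getLsbD j = x.toNat.testBit j := fun _ _ => rfl
  have hsubN : (f - BitVec.ofNat 64 (2 ^ (m + 1))).getLsbD i
      = (f.toNat + 2 ^ 64 - 2 ^ (m + 1)).testBit i := by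
    rw [hgl, BitVec.toNat_sub, hh]
    have h2 : 2 ^ 64 - 2 ^ (m + 1) + f.toNat = f.toNat + 2 ^ 64 - 2 ^ (m + 1) := by omega
    rw [h2, Nat.testBit_mod_two_pow]
    simp [hi]
  rw [BitVec.getLsbD_and, BitVec.getLsbD_not, hsubN]
  simp only [hi, decide_true, Bool.true_and, Bool.and_eq_true, Bool.not_eq_true',
    hgl f]
  constructor
  · rintro ⟨h1, h2⟩
    have := hkey.mp ⟨h2, by rw [hNb i hi]; exact h1⟩
    exact ⟨this.1, h1, fun j hj1 hj2 => by
      have := this.2.2 j hj1 hj2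
      rwa [hNb j (by omega)] at this⟩
  · rintro ⟨h1, h2, h3⟩
    have := hkey.mpr ⟨h1, by rw [hNb i hi]; exact h2, fun j hj1 hj2 => by
      rw [hNb j (by omega)]; exact h3 j hj1 hj2⟩
    exact ⟨h2, this.1⟩
end

section
/- For any natural number f with f ≠ 0, the number g defined by g := f; g := g OR (g >> 1); g := g OR (g >> 2); g := g OR (g >> 4); g := g OR (g >> 8); g := g OR (g >> 16); g := g OR (g >> 32); g := g + 1 (with all operations on 64-bit values, f < 2^64) equals 2^(k+1) where k is the position of the highest set bit of f, i.e., g is the smallest power of two strictly greater than f. -/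
/-! Bit `i` of the smeared value is the or of the bits `i, i+1, …, i + 63` of `f`. Since all bits of
`f` lie below position `64`, every bit at or below the top bit `Nat.log2 f` sees that top bit, and
every bit above it sees only zeros, so the smeared value is `2 ^ (Nat.log2 f + 1) - 1`. -/

namespace Nat

def smear (f : ℕ) : ℕ → ℕ
  | 0 => f
  | k + 1 => smear f k ||| (smear f k >>> 2 ^ k)

theorem testBit_smear (f k i : ℕ) :
    (smear f k).testBit i = true ↔ ∃ j, i ≤ j ∧ j < i + 2 ^ k ∧ f.testBit j = true := by
  induction k generalizing i with
  | zero =>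
    refine ⟨fun h => ⟨i, le_rfl, by omega, h⟩, ?_⟩
    rintro ⟨j, hij, hji, hj⟩
    obtain rfl : j = i := by omega
    exact hj
  | succ k ih =>
    have hpow : 2 ^ (k + 1) = 2 ^ k + 2 ^ k := by ring
    simp only [smear, testBit_or, testBit_shiftRight, Bool.or_eq_true, ih]
    constructor
    · rintro (⟨j, hij, hji, hj⟩ | ⟨j, hij, hji, hj⟩)
      · exact ⟨j, hij, by omega, hj⟩
      · exact ⟨j, by omega, by omega, hj⟩
    · rintro ⟨j, hij, hji, hj⟩
      by_cases hlow : j < i + 2 ^ k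
      · exact Or.inl ⟨j, hij, hlow, hj⟩
      · exact Or.inr ⟨j, by omega, by omega, hj⟩

theorem smear_eq_two_pow_log2_succ_sub_one {f k : ℕ} (hf : f ≠ 0) (hfk : f < 2 ^ 2 ^ k) :
    smear f k = 2 ^ (f.log2 + 1) - 1 := by
  have hlog : f.log2 < 2 ^ k := (log2_lt hf).2 hfk
  apply eq_of_testBit_eq
  intro i
  rw [testBit_two_pow_sub_one]
  by_cases hi : i ≤ f.log2
  · rw [(testBit_smear f k i).2 ⟨f.log2, hi, by omega, testBit_log2 hf⟩]
    simp only [decide_eq_true (Nat.lt_succ_of_le hi)]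
  · rw [decide_eq_false (by omega), Bool.eq_false_iff]
    intro hbit
    obtain ⟨j, hij, -, hj⟩ := (testBit_smear f k i).1 hbit
    have hfj : f < 2 ^ j := (log2_lt hf).1 (by omega)
    simp [testBit_lt_two_pow hfj] at hj

end Nat

/-- The bit-smearing trick: for `0 < f < 2^64`, or-ing `f` with its right shifts by
1, 2, 4, 8, 16, 32 and adding one yields the smallest power of two strictly
exceeding `f`, namely `2 ^ (Nat.log2 f + 1)`. -/
theorem smear_smallest_power_of_two (f : ℕ) (h0 : 0 < f) (h64 : f < 2 ^ 64) :
    (let g1 := f ||| (f >>> 1);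
     let g2 := g1 ||| (g1 >>> 2);
     let g3 := g2 ||| (g2 >>> 4);
     let g4 := g3 ||| (g3 >>> 8);
     let g5 := g4 ||| (g4 >>> 16);
     let g6 := g5 ||| (g5 >>> 32);
     g6 + 1) = 2 ^ (Nat.log2 f + 1) := by
  show Nat.smear f 6 + 1 = _
  rw [Nat.smear_eq_two_pow_log2_succ_sub_one h0.ne' h64]
  exact Nat.sub_add_cancel Nat.one_le_two_pow
end

section
/- For natural numbers i < j, set p := the number obtained from j by clearing all bits strictly below the highest set bit of (i XOR j) (i.e., p = j AND NOT(2^(log2 (i XOR j)) - 1) restricted to finitely many bits, equivalently p = j - (j mod 2^(Nat.log2 (Nat.xor i j)))). Then i + 1 ≤ p ≤ j. -/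
/-!
Let `k` be the position of the leading bit of `i ^^^ j`. Then `i` and `j` agree strictly above
bit `k` and differ at bit `k`, so `i / 2 ^ k ≠ j / 2 ^ k`, and `i < j` forces `i / 2 ^ k < j / 2 ^ k`.
Since `p = 2 ^ k * (j / 2 ^ k)`, this gives `i < 2 ^ k * (i / 2 ^ k + 1) ≤ p ≤ j`.
-/

namespace Nat

theorem div_two_pow_log2_xor_ne {a b : ℕ} (h : a ≠ b) :
    a / 2 ^ (a ^^^ b).log2 ≠ b / 2 ^ (a ^^^ b).log2 := by
  have hxor : a ^^^ b ≠ 0 := fun h0 => h (xor_eq_zero_iff.mp h0)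
  have hlead : 0 < (a ^^^ b) / 2 ^ (a ^^^ b).log2 :=
    Nat.div_pos (Nat.log2_self_le hxor) (Nat.two_pow_pos _)
  intro heq
  rw [← shiftRight_eq_div_pow, shiftRight_xor_distrib, shiftRight_eq_div_pow,
    shiftRight_eq_div_pow, heq, Nat.xor_self] at hlead
  exact lt_irrefl 0 hlead

theorem lt_sub_mod_of_div_lt {a b n : ℕ} (h : a / n < b / n) : a < b - b % n := by
  have hn : 0 < n := Nat.pos_of_ne_zero (by rintro rfl; simp at h)
  rw [← Nat.mul_div_self_eq_mod_sub_self, mul_comm]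
  exact Nat.lt_mul_of_div_lt h hn

end Nat

/-- For `i < j`, clearing from `j` all bits strictly below the highest set bit of
`i ^^^ j` yields a value `p` with `i + 1 ≤ p ≤ j`. -/
theorem mask_leading_bit_between (i j : ℕ) (hij : i < j)
    (p : ℕ) (hp : p = j - j % 2 ^ (Nat.log2 (i ^^^ j))) :
    i + 1 ≤ p ∧ p ≤ j := by
  have hdiv : i / 2 ^ (i ^^^ j).log2 < j / 2 ^ (i ^^^ j).log2 :=
    lt_of_le_of_ne (Nat.div_le_div_right hij.le) (Nat.div_two_pow_log2_xor_ne hij.ne)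
  subst hp
  exact ⟨Nat.lt_sub_mod_of_div_lt hdiv, Nat.sub_le _ _⟩
end

section
/- Consider the infinite binary tree on positive even integers where node 2k has children determined as follows: node m (even) with m = q·2^(s+1) + 2^s for s ≥ 1 and q ≥ 0 has children m - 2^(s-1) and m + 2^(s-1), and leaves are the odd positive integers. For natural numbers i < j, the node p·2 where p = j AND NOT(2^(Nat.log2 (Nat.xor i j)) - 1) (clearing from j all bits below the leading bit of i XOR j) is a common ancestor of the leaves 2i+1 and 2j+1, and it is the lowest such common ancestor. -/
/-!
A node `q·2^(s+1) + 2^s` is the midpoint of its descendant interval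
`(q·2^(s+1), (q+1)·2^(s+1))`, which it determines since `s` is its 2-adic valuation. These
dyadic intervals are laminar: a node lying inside another node's interval has a finer level, so
its whole interval is contained there. For the leaves `2i+1` and `2j+1`, cut at the leading bit
`L` of `i ^^^ j`: `i` and `j` agree above bit `L`, and `i < j` forces bit `L` to be `0` in `i`
and `1` in `j`. So `2i+1 < 2p < 2j+1` all lie in the interval of `2p`, and any common ancestor
of the two leaves contains `2p`, hence its whole interval.
-/

/-- In the interlaced ortree, the even index `m = q·2^(s+1) + 2^s` (with `s ≥ 1`)
is an ancestor of the (odd) leaf index `t` iff `t` lies in the open interval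
`(m - 2^s, m + 2^s)`. -/
def OrtreeAncestor (m t : ℕ) : Prop :=
  ∃ q s, 1 ≤ s ∧ m = q * 2 ^ (s + 1) + 2 ^ s ∧ m - 2 ^ s < t ∧ t < m + 2 ^ s

open Set

/-- The descendant interval of the node `q·2^(s+1) + 2^s`. -/
def ortreeSpan (q s : ℕ) : Set ℕ := Ioo (q * 2 ^ (s + 1)) ((q + 1) * 2 ^ (s + 1))

lemma Nat.Ioo_mul_subset_Ioo_mul_of_dvd {N M b c x : ℕ} (hNM : N ∣ M)
    (hxM : x ∈ Ioo (b * M) ((b + 1) * M)) (hxN : x ∈ Ioo (c * N) ((c + 1) * N)) :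
    Ioo (c * N) ((c + 1) * N) ⊆ Ioo (b * M) ((b + 1) * M) := by
  obtain ⟨r, rfl⟩ := hNM
  have hlo : b * r < c + 1 := Nat.lt_of_mul_lt_mul_right (a := N) <| by
    calc b * r * N = b * (N * r) := by ring
      _ < (c + 1) * N := hxM.1.trans hxN.2
  have hhi : c < (b + 1) * r := Nat.lt_of_mul_lt_mul_right (a := N) <| by
    calc c * N < (b + 1) * (N * r) := hxN.1.trans hxM.2
      _ = (b + 1) * r * N := by ring
  apply Ioo_subset_Ioo
  · calc b * (N * r) = b * r * N := by ring
      _ ≤ c * N := Nat.mul_le_mul_right N (by omega)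
  · calc (c + 1) * N ≤ (b + 1) * r * N := Nat.mul_le_mul_right N hhi
      _ = (b + 1) * (N * r) := by ring

lemma ortreeNode_mem_ortreeSpan (q s : ℕ) : q * 2 ^ (s + 1) + 2 ^ s ∈ ortreeSpan q s := by
  have : 0 < 2 ^ s := by positivity
  constructor <;> rw [pow_succ] <;> nlinarith

lemma ortreeAncestor_iff_exists_mem_ortreeSpan {m t : ℕ} :
    OrtreeAncestor m t ↔
      ∃ q s, 1 ≤ s ∧ m = q * 2 ^ (s + 1) + 2 ^ s ∧ t ∈ ortreeSpan q s := by
  refine exists₂_congr fun q s => and_congr_right fun _ => and_congr_right fun hm => ?_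
  simp only [ortreeSpan, mem_Ioo, hm, add_mul, one_mul, pow_succ]
  omega

lemma padicValNat_two_ortreeNode (q s : ℕ) : padicValNat 2 (q * 2 ^ (s + 1) + 2 ^ s) = s := by
  have hodd : ¬ 2 ∣ 2 * q + 1 := by omega
  rw [show q * 2 ^ (s + 1) + 2 ^ s = 2 ^ s * (2 * q + 1) by ring,
    padicValNat.mul (by positivity) (by omega), padicValNat.prime_pow,
    padicValNat.eq_zero_of_not_dvd hodd, add_zero]

lemma ortreeNode_injective {q s q' s' : ℕ}
    (h : q * 2 ^ (s + 1) + 2 ^ s = q' * 2 ^ (s' + 1) + 2 ^ s') : q = q' ∧ s = s' := by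
  obtain rfl : s = s' := by
    rw [← padicValNat_two_ortreeNode q s, h, padicValNat_two_ortreeNode]
  exact ⟨Nat.eq_of_mul_eq_mul_right (by positivity) (Nat.add_right_cancel h), rfl⟩

lemma ortreeAncestor_iff {m t q s : ℕ} (hs : 1 ≤ s) (hm : m = q * 2 ^ (s + 1) + 2 ^ s) :
    OrtreeAncestor m t ↔ t ∈ ortreeSpan q s := by
  refine ortreeAncestor_iff_exists_mem_ortreeSpan.trans ⟨?_, fun ht => ⟨q, s, hs, hm, ht⟩⟩
  rintro ⟨q', s', -, hm', ht⟩
  obtain ⟨rfl, rfl⟩ := ortreeNode_injective (hm.symm.trans hm')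
  exact ht

lemma ortreeSpan_subset_of_mem {c r q s : ℕ}
    (h : c * 2 ^ (r + 1) + 2 ^ r ∈ ortreeSpan q s) : ortreeSpan c r ⊆ ortreeSpan q s := by
  have hrs : r + 1 ≤ s + 1 := by
    by_contra! hsr
    have hdvd : 2 ^ (s + 1) ∣ c * 2 ^ (r + 1) + 2 ^ r :=
      dvd_add ((pow_dvd_pow 2 (by omega)).mul_left c) (pow_dvd_pow 2 (by omega))
    exact Nat.not_dvd_of_lt_of_lt_mul_succ ((mul_comm _ _).trans_lt h.1)
      (h.2.trans_eq (mul_comm _ _)) hdvd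
  exact Nat.Ioo_mul_subset_Ioo_mul_of_dvd (pow_dvd_pow 2 hrs) h
    (ortreeNode_mem_ortreeSpan c r)

lemma Nat.decomp_at_log2_xor {i j : ℕ} (hij : i < j) :
    i = 2 ^ (Nat.log2 (i ^^^ j) + 1) * (j / 2 ^ (Nat.log2 (i ^^^ j) + 1)) +
        i % 2 ^ Nat.log2 (i ^^^ j) ∧
      j = 2 ^ (Nat.log2 (i ^^^ j) + 1) * (j / 2 ^ (Nat.log2 (i ^^^ j) + 1)) +
        2 ^ Nat.log2 (i ^^^ j) + j % 2 ^ Nat.log2 (i ^^^ j) := by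
  set L := Nat.log2 (i ^^^ j)
  have hx : i ^^^ j ≠ 0 := by rw [Ne, Nat.xor_eq_zero_iff]; omega
  have hlead : (i ^^^ j) / 2 ^ L = 1 :=
    Nat.div_eq_of_lt_le (by simpa using Nat.log2_self_le hx)
      (by simpa [pow_succ, mul_comm] using Nat.lt_log2_self (n := i ^^^ j))
  have hAB : i / 2 ^ L ^^^ j / 2 ^ L = 1 := by
    rw [← Nat.shiftRight_eq_div_pow, ← Nat.shiftRight_eq_div_pow,
      ← Nat.shiftRight_xor_distrib, Nat.shiftRight_eq_div_pow, hlead]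
  have hhigh : i / 2 ^ L / 2 = j / 2 ^ L / 2 := by
    rw [← Nat.xor_eq_zero_iff, ← Nat.shiftRight_one, ← Nat.shiftRight_one,
      ← Nat.shiftRight_xor_distrib, hAB]
    rfl
  have hne : i / 2 ^ L ≠ j / 2 ^ L := by intro h; rw [h, Nat.xor_self] at hAB; simp at hAB
  have hle : i / 2 ^ L ≤ j / 2 ^ L := Nat.div_le_div_right hij.le
  obtain ⟨hi, hj⟩ :
      i / 2 ^ L = 2 * (j / 2 ^ (L + 1)) ∧ j / 2 ^ L = 2 * (j / 2 ^ (L + 1)) + 1 := by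
    rw [pow_succ, ← Nat.div_div_eq_div_mul]
    omega
  constructor
  · conv_lhs => rw [← Nat.div_add_mod i (2 ^ L), hi]
    ring
  · conv_lhs => rw [← Nat.div_add_mod j (2 ^ L), hj]
    ring

/-- For `i < j`, the node `2p`, where `p` is obtained from `j` by clearing all bits
strictly below the leading bit of `i ^^^ j`, is a common ancestor of the leaves
`2i+1` and `2j+1`, and it is the lowest such common ancestor (any other common
ancestor covers all leaves that `2p` covers). -/
theorem ortree_lca (i j : ℕ) (hij : i < j)
    (p : ℕ) (hp : p = j - j % 2 ^ (Nat.log2 (i ^^^ j))) :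
    OrtreeAncestor (2 * p) (2 * i + 1) ∧ OrtreeAncestor (2 * p) (2 * j + 1) ∧
      ∀ m, OrtreeAncestor m (2 * i + 1) → OrtreeAncestor m (2 * j + 1) →
        ∀ t, OrtreeAncestor (2 * p) t → OrtreeAncestor m t := by
  obtain ⟨hi, hj⟩ := Nat.decomp_at_log2_xor hij
  set L := Nat.log2 (i ^^^ j)
  set q := j / 2 ^ (L + 1)
  have him := Nat.mod_lt i (pow_pos two_pos L)
  have hjm := Nat.mod_lt j (pow_pos two_pos L)
  have hlo : q * 2 ^ (L + 1 + 1) = 2 * (2 ^ (L + 1) * q) := by ring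
  have hhi : (q + 1) * 2 ^ (L + 1 + 1) = 2 * (2 ^ (L + 1) * q) + 4 * 2 ^ L := by ring
  have hnode : 2 * p = q * 2 ^ (L + 1 + 1) + 2 ^ (L + 1) := by omega
  have hspan : ∀ t, OrtreeAncestor (2 * p) t ↔ t ∈ ortreeSpan q (L + 1) :=
    fun t => ortreeAncestor_iff (by omega) hnode
  have hleft : 2 * i + 1 ∈ ortreeSpan q (L + 1) := by
    simp only [ortreeSpan, mem_Ioo, hlo, hhi]; omega
  have hright : 2 * j + 1 ∈ ortreeSpan q (L + 1) := by
    simp only [ortreeSpan, mem_Ioo, hlo, hhi]; omega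
  refine ⟨(hspan _).2 hleft, (hspan _).2 hright, fun m hmi hmj t ht => ?_⟩
  obtain ⟨c, s, hs, hm, hci⟩ := ortreeAncestor_iff_exists_mem_ortreeSpan.1 hmi
  have hcj := (ortreeAncestor_iff hs hm).1 hmj
  have hmid : 2 * p ∈ ortreeSpan c s := ⟨hci.1.trans (by omega), lt_trans (by omega) hcj.2⟩
  rw [hnode] at hmid
  exact (ortreeAncestor_iff hs hm).2 (ortreeSpan_subset_of_mem hmid ((hspan t).1 ht))
end

section
/- Let fill : ℕ → ℕ satisfy the ortree invariant fill(m) = fill(m - 2^(s-1)) ∨ fill(m + 2^(s-1)) for every internal index m with 2-adic valuation s ≥ 1 (bitwise OR). Fix i < j and let p be the index with 2p the lowest common ancestor of leaves 2i+1 and 2j+1. Then the following iteration computes OR of fill over odd indices strictly between 2i and 2p: initialize f := 0, a := i - p; while a ≠ 0, let s := a AND (-a) (the lowest set bit of a, computed in two's complement, i.e., s = 2^(2-adic valuation of (p - i)) at the first step with a interpreted as p - i negated), update f := f OR fill(2p + 2a + s) and a := a + s. Upon termination, f = ⋁ { fill(t) : t odd, 2i < t < 2p }. -/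
/-!
Node `q * 2 ^ (k + 1) + 2 ^ k` of an ortree stores the OR of the leaves in
`(q * 2 ^ (k + 1), (q + 1) * 2 ^ (k + 1))`. With `D = 2 ^ log2 (i ^^^ j)`, the numbers `i` and `j`
agree above bit `log2 (i ^^^ j)` and differ at it, so `j / D = i / D + 1`; hence `p = D * (j / D)`
is a multiple of `D` with `i < p ≤ i + D`. While `a ≤ D`, the lowest bit `s = 2 ^ k` of `a` also
divides `p`, so `2p - 2a + s` is exactly the node covering `(2p - 2a, 2p - 2a + 2s)`: the loop
tiles `(2i, 2p)` by these blocks from left to right.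
-/

/-- Lowest set bit of `a` (equals `a &&& -a` in two's complement). -/
def lowBit (a : ℕ) : ℕ := a - (a &&& (a - 1))

def ortreeOr (fill : ℕ → ℕ) (lo hi : ℕ) : ℕ :=
  (((List.range hi).filter (fun t => decide (lo < t) && decide (t % 2 = 1))).map fill).foldr
    (· ||| ·) 0

/-- The first loop of `ortree_or_x2`: with the loop variable `a = p - i`
(written in the C code in two's complement as `a = i - p`), while `a ≠ 0`,
take `s := lowBit a`, or in `fill (2p - 2a + s)` (in the C code
`fill[2*p + 2*a + s]` with `a` negative) and set `a := a - s`.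
Executed with fuel `a`, which suffices for termination. -/
def ortreeLoop1 (fill : ℕ → ℕ) (p : ℕ) : ℕ → ℕ → ℕ
  | 0, _ => 0
  | fuel + 1, a =>
    if a = 0 then 0
    else
      ortreeLoop1 fill p fuel (a - lowBit a) ||| fill (2 * p - 2 * a + lowBit a)

theorem lowBit_two_mul_add_one (m : ℕ) : lowBit (2 * m + 1) = 1 := by
  have h := Nat.land_bit true m false m
  simp only [Nat.bit_true_apply, Nat.bit_false_apply, Bool.true_and, Nat.and_self] at h
  simp only [lowBit, Nat.add_sub_cancel, h]
  omega

theorem lowBit_two_mul {b : ℕ} (hb : b ≠ 0) : lowBit (2 * b) = 2 * lowBit b := by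
  have h := Nat.land_bit false b true (b - 1)
  simp only [Nat.bit_true_apply, Nat.bit_false_apply, Bool.false_and] at h
  have hpred : 2 * b - 1 = 2 * (b - 1) + 1 := by omega
  have hle : b &&& (b - 1) ≤ b := Nat.and_le_left
  simp only [lowBit, hpred, h]
  omega

theorem lowBit_two_pow_mul_odd (k : ℕ) {m : ℕ} (hm : Odd m) : lowBit (2 ^ k * m) = 2 ^ k := by
  induction k with
  | zero => obtain ⟨r, rfl⟩ := hm; simpa using lowBit_two_mul_add_one r
  | succ k ih => rw [pow_succ', mul_assoc, lowBit_two_mul (by positivity [hm.pos]), ih]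

theorem eq_add_one_of_xor_eq_one {x y : ℕ} (hxy : x ≤ y) (h : x ^^^ y = 1) : y = x + 1 := by
  have hhalf : x / 2 = y / 2 := by
    refine Nat.eq_of_xor_eq_zero ?_
    rw [← Nat.xor_div_two, h]
  have hpar : (x ^^^ y) % 2 = 1 := by rw [h]
  rw [Nat.xor_mod_two_eq_one] at hpar
  omega

theorem div_two_pow_log2_xor_eq_add_one {i j : ℕ} (hij : i < j) :
    j / 2 ^ Nat.log2 (i ^^^ j) = i / 2 ^ Nat.log2 (i ^^^ j) + 1 := by
  have hne : i ^^^ j ≠ 0 := fun h => hij.ne (Nat.eq_of_xor_eq_zero h)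
  apply eq_add_one_of_xor_eq_one (Nat.div_le_div_right hij.le)
  rw [← Nat.xor_div_two_pow]
  refine Nat.div_eq_of_lt_le ?_ ?_
  · simpa using Nat.log2_self_le hne
  · simpa [pow_succ, mul_comm] using Nat.lt_log2_self (n := i ^^^ j)

theorem sub_mod_mem_Ioc_of_div_eq_add_one {i j D : ℕ} (hD : 0 < D) (h : j / D = i / D + 1) :
    j - j % D ∈ Set.Ioc i (i + D) := by
  have hj := Nat.div_add_mod j D
  have hi_lo : D * (i / D) ≤ i := Nat.mul_div_le i D
  have hi_hi : i < D * (i / D) + D := by simpa [mul_add] using Nat.lt_mul_div_succ i hD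
  rw [h, mul_add, mul_one] at hj
  constructor <;> omega

section

variable (fill : ℕ → ℕ)

theorem ortreeOr_of_le {lo hi : ℕ} (h : hi ≤ lo) : ortreeOr fill lo hi = 0 := by
  rw [ortreeOr, List.filter_eq_nil_iff.mpr]
  · rfl
  · intro t ht
    simp only [List.mem_range] at ht
    simp only [Bool.and_eq_true, decide_eq_true_eq]
    omega

theorem ortreeOr_succ (lo hi : ℕ) :
    ortreeOr fill lo (hi + 1) =
      if lo < hi ∧ hi % 2 = 1 then ortreeOr fill lo hi ||| fill hi else ortreeOr fill lo hi := by
  rw [ortreeOr, ortreeOr, List.range_succ, List.filter_append, List.filter_singleton]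
  by_cases h : lo < hi ∧ hi % 2 = 1
  · rw [if_pos h]
    simp only [h, decide_true, Bool.and_self, cond_true, List.map_append, List.foldr_append,
      List.map_singleton, List.foldr_cons, List.foldr_nil]
    simpa using List.foldr_assoc (op := fun x y : ℕ => x ||| y) (a₁ := 0) (a₂ := fill hi)
  · have hcond : (decide (lo < hi) && decide (hi % 2 = 1)) = false := by simpa using h
    rw [if_neg h, hcond, cond_false, List.append_nil]

theorem ortreeOr_or_ortreeOr {lo mid hi : ℕ} (hlo : lo ≤ mid) (hhi : mid ≤ hi) (hmid : Even mid) :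
    ortreeOr fill lo mid ||| ortreeOr fill mid hi = ortreeOr fill lo hi := by
  induction hi, hhi using Nat.le_induction with
  | base => rw [ortreeOr_of_le fill le_rfl, Nat.or_zero]
  | succ hi hmh ih =>
    rw [ortreeOr_succ, ortreeOr_succ, ← ih]
    by_cases hodd : hi % 2 = 1
    · have hmid_lt : mid < hi := by rcases hmid with ⟨r, rfl⟩; omega
      rw [if_pos ⟨hmid_lt, hodd⟩, if_pos ⟨by omega, hodd⟩, Nat.or_assoc]
    · rw [if_neg (by tauto), if_neg (by tauto)]

end

-- `q * 2 ^ (s + 1) + 2 ^ s` runs over the internal nodes of 2-adic valuation `s`; their two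
-- children are the nodes `2 ^ (s - 1)` to either side.
def IsOrtree (fill : ℕ → ℕ) : Prop :=
  ∀ q s, 1 ≤ s →
    fill (q * 2 ^ (s + 1) + 2 ^ s) =
      fill (q * 2 ^ (s + 1) + 2 ^ s - 2 ^ (s - 1)) ||| fill (q * 2 ^ (s + 1) + 2 ^ s + 2 ^ (s - 1))

namespace IsOrtree

variable {fill : ℕ → ℕ}

theorem fill_eq_ortreeOr (hfill : IsOrtree fill) (k q : ℕ) :
    fill (q * 2 ^ (k + 1) + 2 ^ k) = ortreeOr fill (q * 2 ^ (k + 1)) ((q + 1) * 2 ^ (k + 1)) := by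
  induction k generalizing q with
  | zero =>
    rw [show (q + 1) * 2 ^ (0 + 1) = 2 * q + 1 + 1 by ring, ortreeOr_succ, ortreeOr_succ,
      if_pos (by omega), if_neg (by omega), ortreeOr_of_le fill (by omega), Nat.zero_or]
    ring_nf
  | succ k ih =>
    have hnode := hfill q (k + 1) (by omega)
    rw [Nat.add_sub_cancel,
      show q * 2 ^ (k + 1 + 1) + 2 ^ (k + 1) - 2 ^ k = 2 * q * 2 ^ (k + 1) + 2 ^ k from
        Nat.sub_eq_of_eq_add (by ring),
      show q * 2 ^ (k + 1 + 1) + 2 ^ (k + 1) + 2 ^ k = (2 * q + 1) * 2 ^ (k + 1) + 2 ^ k by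
        ring, ih, ih] at hnode
    rw [hnode, ortreeOr_or_ortreeOr]
    · congr 1 <;> ring
    · exact Nat.mul_le_mul_right _ (by omega)
    · exact Nat.mul_le_mul_right _ (by omega)
    · exact (Nat.even_pow.mpr ⟨even_two, by omega⟩).mul_left _

theorem ortreeLoop1_eq_ortreeOr (hfill : IsOrtree fill) {p L : ℕ} (hp : 2 ^ L ∣ p) :
    ∀ {fuel a : ℕ}, a ≤ fuel → a ≤ 2 ^ L → a ≤ p →
      ortreeLoop1 fill p fuel a = ortreeOr fill (2 * p - 2 * a) (2 * p)
  | 0, a, hfuel, _, _ => by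
    rw [Nat.le_zero.mp hfuel, ortreeLoop1, Nat.mul_zero, Nat.sub_zero, ortreeOr_of_le fill le_rfl]
  | fuel + 1, a, hfuel, haL, hap => by
    rcases eq_or_ne a 0 with rfl | ha
    · simp [ortreeLoop1, ortreeOr_of_le]
    obtain ⟨k, m, hm, hakm⟩ := Nat.exists_eq_two_pow_mul_odd ha
    have hka : 2 ^ k ≤ a := hakm ▸ Nat.le_mul_of_pos_right _ hm.pos
    have hk : 0 < 2 ^ k := Nat.two_pow_pos k
    have hkL : k ≤ L := (Nat.pow_le_pow_iff_right (by norm_num)).mp (hka.trans haL)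
    obtain ⟨q, hq⟩ : 2 ^ k ∣ p - a :=
      Nat.dvd_sub ((Nat.pow_dvd_pow 2 hkL).trans hp) (hakm ▸ dvd_mul_right _ _)
    have hlo : 2 * p - 2 * a = q * 2 ^ (k + 1) := by
      rw [show q * 2 ^ (k + 1) = 2 * (2 ^ k * q) by ring, ← hq]; omega
    have hhi : (q + 1) * 2 ^ (k + 1) = 2 * p - 2 * (a - 2 ^ k) := by
      rw [add_mul, one_mul, ← hlo, pow_succ]; omega
    have hrec : ortreeLoop1 fill p fuel (a - 2 ^ k) =
        ortreeOr fill (2 * p - 2 * (a - 2 ^ k)) (2 * p) :=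
      hfill.ortreeLoop1_eq_ortreeOr hp (by omega) (by omega) (by omega)
    rw [ortreeLoop1, if_neg ha, hakm, lowBit_two_pow_mul_odd k hm, ← hakm, hrec, hlo,
      hfill.fill_eq_ortreeOr, Nat.lor_comm, hhi, ← hlo]
    exact ortreeOr_or_ortreeOr fill (by omega) (by omega) ⟨p - (a - 2 ^ k), by omega⟩

end IsOrtree

/-- In the interlaced ortree (`OrtreeAncestor` as below) with the invariant that
every internal node stores the OR of its children, the first loop of
`ortree_or_x2` terminates and computes the OR of `fill` over the odd leaf
indices strictly between `2i` and `2p`, where `2p` is the lowest common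
ancestor of the leaves `2i+1` and `2j+1`. -/
theorem ortree_or_first_loop
    (fill : ℕ → ℕ)
    (hinv : ∀ q s, 1 ≤ s →
      fill (q * 2 ^ (s + 1) + 2 ^ s) =
        fill (q * 2 ^ (s + 1) + 2 ^ s - 2 ^ (s - 1)) |||
          fill (q * 2 ^ (s + 1) + 2 ^ s + 2 ^ (s - 1)))
    (i j : ℕ) (hij : i < j)
    (p : ℕ) (hp : p = j - j % 2 ^ (Nat.log2 (i ^^^ j))) :
    ortreeLoop1 fill p (p - i) (p - i) = ortreeOr fill (2 * i) (2 * p) := by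
  obtain ⟨hip, hpi⟩ := hp ▸ sub_mod_mem_Ioc_of_div_eq_add_one (Nat.two_pow_pos _)
    (div_two_pow_log2_xor_eq_add_one hij)
  have hfill : IsOrtree fill := hinv
  rw [hfill.ortreeLoop1_eq_ortreeOr (hp ▸ Nat.dvd_sub_mod j) le_rfl (by omega) (by omega)]
  congr 1
  omega
end

section
/- In the interlaced ortree, if exactly one of i and k is odd (i < k, with 2k an ancestor of leaf 2i+1 lying to its right), then node 2i+2 is an ancestor of leaf 2i+3 = 2(i+1)+1, i+1 ≤ k, and node 2k is an ancestor of leaf 2(i+1)+1; consequently the OR of leaf data over odd indices in (2i, 2k) equals fill(2i+1) OR (OR of leaf data over odd indices in (2(i+1), 2k)). -/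
lemma ortree_key (i : ℕ) : ∀ n,
    (List.range n).filter (fun t => decide (2*i < t) && decide (t % 2 = 1)) =
    (if 2*i+1 < n then [2*i+1] else []) ++
      (List.range n).filter (fun t => decide (2*i+2 < t) && decide (t % 2 = 1)) := by
  intro n
  induction n with
  | zero => simp
  | succ n ih =>
    rw [List.range_succ, List.filter_append, List.filter_append, ih]
    rcases lt_trichotomy n (2*i+1) with h | h | h
    · have h1 : ¬ (2*i < n) := by omega
      have h2 : ¬ (2*i+2 < n) := by omega
      have h3 : ¬ (2*i+1 < n) := by omega
      have h4 : ¬ (2*i+1 < n+1) := by omega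
      simp [h1, h2, h3, h4]
    · subst h
      have hnil : (List.range (2*i+1)).filter
          (fun t => decide (2*i+2 < t) && decide (t % 2 = 1)) = [] := by
        rw [List.filter_eq_nil_iff]
        intro a ha
        simp only [List.mem_range] at ha
        simp only [Bool.and_eq_true, decide_eq_true_eq, not_and]
        omega
      have h1 : (2*i < 2*i+1) := by omega
      have h2 : (2*i+1) % 2 = 1 := by omega
      have h3 : ¬ (2*i+2 < 2*i+1) := by omega
      simp [hnil, h1, h2, h3]
    · have h4 : 2*i+1 < n + 1 := by omega
      have h5 : 2*i+1 < n := h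
      by_cases he : n % 2 = 1
      · rcases lt_trichotomy n (2*i+2) with hc | hc | hc
        · omega
        · omega
        · have h6 : 2*i < n := by omega
          simp [h4, h5, he, h6, hc]
      · simp [h4, h5, he]

lemma anc_succ (i : ℕ) : OrtreeAncestor (2*i+2) (2*(i+1)+1) := by
  obtain ⟨a, m, hm, h⟩ := Nat.exists_eq_pow_mul_and_not_dvd (n := i+1) (by omega) 2 (by norm_num)
  obtain ⟨q, hq⟩ : ∃ q, m = 2*q+1 := by
    rcases Nat.even_or_odd m with he | ho
    · exact absurd he.two_dvd hm
    · obtain ⟨q, hq⟩ := ho; exact ⟨q, by omega⟩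
  refine ⟨q, a+1, by omega, ?_, ?_, ?_⟩
  · have : 2*i+2 = 2*(i+1) := by omega
    rw [this, h, hq]; ring
  · exact lt_of_le_of_lt (Nat.sub_le _ _) (by omega)
  · have : 2 ≤ 2^(a+1) := by
      calc 2 = 2^1 := rfl
      _ ≤ 2^(a+1) := Nat.pow_le_pow_right (by norm_num) (by omega)
    omega

/-- Second case of the recursion: if exactly one of `i` and `k` is odd, `i < k`,
and `2k` is an ancestor of the leaf `2i+1` lying to its right, then `2i+2` is
an ancestor of the leaf `2(i+1)+1 = 2i+3`, `i + 1 ≤ k`, `2k` is an ancestor of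
the leaf `2(i+1)+1`, and the OR of leaf data over odd indices in `(2i, 2k)`
equals `fill (2i+1)` OR-ed with the OR over odd indices in `(2(i+1), 2k)`. -/
theorem ortree_one_odd_case (fill : ℕ → ℕ) (i k : ℕ) (hik : i < k)
    (hodd : (Odd i ∧ ¬Odd k) ∨ (¬Odd i ∧ Odd k))
    (hanc : OrtreeAncestor (2 * k) (2 * i + 1)) (hlt : 2 * i + 1 < 2 * k) :
    OrtreeAncestor (2 * i + 2) (2 * (i + 1) + 1) ∧ i + 1 ≤ k ∧
      OrtreeAncestor (2 * k) (2 * (i + 1) + 1) ∧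
      ortreeOr fill (2 * i) (2 * k) =
        fill (2 * i + 1) ||| ortreeOr fill (2 * (i + 1)) (2 * k) := by
  refine ⟨anc_succ i, by omega, ?_, ?_⟩
  · obtain ⟨q, s, hs, heq, hl, hr⟩ := hanc
    refine ⟨q, s, hs, heq, by omega, ?_⟩
    have : 2 ≤ 2^s := by
      calc 2 = 2^1 := rfl
      _ ≤ 2^s := Nat.pow_le_pow_right (by norm_num) hs
    omega
  · unfold ortreeOr
    have h2 : 2 * (i+1) = 2*i+2 := by ring
    rw [h2, ortree_key i (2*k), if_pos hlt]
    simp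
end

section
/- If occ : ℤ × ℤ → Bool vanishes outside [0,H) × [0,W) and two equal tiles can be connected by at most 3 free axis-parallel segments, then they can be connected by at most 3 free segments in which either the first and last segments are horizontal and the middle one vertical, or the first and last are vertical and the middle one horizontal, or the connection is degenerate (fewer segments: a single segment, or two segments forming an L); moreover every connection with fewer than 3 segments can be viewed as a degenerate case of a 3-segment connection of one of the two shapes. -/
/-- The horizontal segment in row `r` between columns `a` and `b` is free. -/
def SegFreeH (occ : ℤ × ℤ → Bool) (r a b : ℤ) : Prop :=
  ∀ c, min a b < c → c < max a b → occ (r, c) = false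

/-- The vertical segment in column `c` between rows `a` and `b` is free. -/
def SegFreeV (occ : ℤ × ℤ → Bool) (c a b : ℤ) : Prop :=
  ∀ r, min a b < r → r < max a b → occ (r, c) = false

/-- A single free axis-parallel segment (possibly of zero length) from `p` to `q`. -/
def Seg (occ : ℤ × ℤ → Bool) (p q : ℤ × ℤ) : Prop :=
  (p.1 = q.1 ∧ SegFreeH occ p.1 p.2 q.2) ∨ (p.2 = q.2 ∧ SegFreeV occ p.2 p.1 q.1)

/-- A connection by at most three free axis-parallel segments, with free
turning points (zero-length segments allowed). -/
def Conn3 (occ : ℤ × ℤ → Bool) (t1 t2 : ℤ × ℤ) : Prop :=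
  ∃ a b : ℤ × ℤ, Seg occ t1 a ∧ Seg occ a b ∧ Seg occ b t2 ∧
    occ a = false ∧ occ b = false

/-- A horizontal–vertical–horizontal free connection between `t1` and `t2`. -/
def HVHConn (occ : ℤ × ℤ → Bool) (t1 t2 : ℤ × ℤ) : Prop :=
  ∃ c : ℤ, SegFreeH occ t1.1 t1.2 c ∧ SegFreeV occ c t1.1 t2.1 ∧
    SegFreeH occ t2.1 c t2.2 ∧ occ (t1.1, c) = false ∧ occ (t2.1, c) = false

/-- A vertical–horizontal–vertical free connection between `t1` and `t2`. -/
def VHVConn (occ : ℤ × ℤ → Bool) (t1 t2 : ℤ × ℤ) : Prop :=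
  ∃ r : ℤ, SegFreeV occ t1.2 t1.1 r ∧ SegFreeH occ r t1.2 t2.2 ∧
    SegFreeV occ t2.2 r t2.1 ∧ occ (r, t1.2) = false ∧ occ (r, t2.2) = false

lemma segH_refl (occ : ℤ × ℤ → Bool) (r x : ℤ) : SegFreeH occ r x x := by
  intro c h1 h2; exact absurd h2 (by omega)

lemma segV_refl (occ : ℤ × ℤ → Bool) (c x : ℤ) : SegFreeV occ c x x := by
  intro r h1 h2; exact absurd h2 (by omega)

lemma segH_trans {occ : ℤ × ℤ → Bool} {r x y z : ℤ}
    (h1 : SegFreeH occ r x y) (hy : occ (r, y) = false)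
    (h2 : SegFreeH occ r y z) : SegFreeH occ r x z := by
  intro c hc1 hc2
  have h : (min x y < c ∧ c < max x y) ∨ c = y ∨ (min y z < c ∧ c < max y z) := by omega
  rcases h with ⟨a1, a2⟩ | rfl | ⟨a1, a2⟩
  · exact h1 c a1 a2
  · exact hy
  · exact h2 c a1 a2

lemma segV_trans {occ : ℤ × ℤ → Bool} {co x y z : ℤ}
    (h1 : SegFreeV occ co x y) (hy : occ (y, co) = false)
    (h2 : SegFreeV occ co y z) : SegFreeV occ co x z := by
  intro r hc1 hc2
  have h : (min x y < r ∧ r < max x y) ∨ r = y ∨ (min y z < r ∧ r < max y z) := by omega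
  rcases h with ⟨a1, a2⟩ | rfl | ⟨a1, a2⟩
  · exact h1 r a1 a2
  · exact hy
  · exact h2 r a1 a2

/-- Every connection by at most three free segments can be normalized to a
horizontal–vertical–horizontal or a vertical–horizontal–vertical connection
(with possibly zero-length segments); moreover single-segment and two-segment
connections are degenerate cases of three-segment connections. -/
theorem conn3_normalization
    (H W : ℤ) (occ : ℤ × ℤ → Bool)
    (hbound : ∀ r c : ℤ, (r < 0 ∨ H ≤ r ∨ c < 0 ∨ W ≤ c) → occ (r, c) = false)
    (t1 t2 : ℤ × ℤ)
    (occ' : ℤ × ℤ → Bool)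
    (hocc' : occ' = fun x => if x = t1 ∨ x = t2 then false else occ x) :
    (Conn3 occ' t1 t2 → HVHConn occ' t1 t2 ∨ VHVConn occ' t1 t2) ∧
    (Seg occ' t1 t2 → Conn3 occ' t1 t2) ∧
    (∀ a : ℤ × ℤ, Seg occ' t1 a → Seg occ' a t2 → occ' a = false →
      Conn3 occ' t1 t2) := by
  obtain ⟨r1, c1⟩ := t1
  obtain ⟨r2, c2⟩ := t2
  have ht1 : occ' (r1, c1) = false := by rw [hocc']; simp
  have ht2 : occ' (r2, c2) = false := by rw [hocc']; simp
  refine ⟨?_, ?_, ?_⟩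
  · rintro ⟨⟨ra, ca⟩, ⟨rb, cb⟩, s1, s2, s3, ha, hb⟩
    simp only [Seg] at s1 s2 s3
    rcases s1 with ⟨rfl, f1⟩ | ⟨rfl, f1⟩
    · rcases s2 with ⟨rfl, f2⟩ | ⟨rfl, f2⟩
      · rcases s3 with ⟨rfl, f3⟩ | ⟨rfl, f3⟩
        · -- HHH
          exact Or.inl ⟨c2, segH_trans (segH_trans f1 ha f2) hb f3,
            segV_refl _ _ _, segH_refl _ _ _, ht2, ht2⟩
        · -- HHV
          exact Or.inl ⟨cb, segH_trans f1 ha f2, f3, segH_refl _ _ _, hb, ht2⟩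
      · rcases s3 with ⟨rfl, f3⟩ | ⟨rfl, f3⟩
        · -- HVH
          exact Or.inl ⟨ca, f1, f2, f3, ha, hb⟩
        · -- HVV
          exact Or.inl ⟨ca, f1, segV_trans f2 hb f3, segH_refl _ _ _, ha, ht2⟩
    · rcases s2 with ⟨rfl, f2⟩ | ⟨rfl, f2⟩
      · rcases s3 with ⟨rfl, f3⟩ | ⟨rfl, f3⟩
        · -- VHH
          exact Or.inr ⟨ra, f1, segH_trans f2 hb f3, segV_refl _ _ _, ha, ht2⟩
        · -- VHV
          exact Or.inr ⟨ra, f1, f2, f3, ha, hb⟩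
      · rcases s3 with ⟨rfl, f3⟩ | ⟨rfl, f3⟩
        · -- VVH
          exact Or.inr ⟨rb, segV_trans f1 ha f2, f3, segV_refl _ _ _, hb, ht2⟩
        · -- VVV
          exact Or.inr ⟨r2, segV_trans (segV_trans f1 ha f2) hb f3,
            segH_refl _ _ _, segV_refl _ _ _, ht2, ht2⟩
  · intro h
    exact ⟨(r1, c1), (r1, c1), Or.inl ⟨rfl, segH_refl _ _ _⟩,
      Or.inl ⟨rfl, segH_refl _ _ _⟩, h, ht1, ht1⟩
  · intro a h1 h2 hafree
    exact ⟨a, a, h1, Or.inl ⟨rfl, segH_refl _ _ _⟩, h2, hafree, hafree⟩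
end
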